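/- For a degree-$2p$-exact-up-to-$\epsilon$ quadrature rule (residual $\ell_1$-norm $\le \epsilon$ on the orthonormal basis up to degree $2p$), bounded operator $\mathbb{I}$ with constant $W$, and projection error $\|y - y_p\|_2 \le \delta$, each computed coefficient satisfies $|c_j - \tilde c_j| \le LT\epsilon + W\delta$ for all $j \le N_p$, where $c_j = \mathbb{E}[y\Psi_j]$, $\tilde c_j = \mathbb{I}[y\Psi_j]$, $\|y\|_2 \le L$, and $T = \max_{j,l \le N_{2p}}\|\Psi_j\Psi_l\|_2$. -/

import Mathlib

/-!
With `Q = quadrature w ξ` and `c_j = E[y_p Ψ_j]`, split `c_j - Q[y Ψ_j]` as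
`(E[y_p Ψ_j] - Q[y_p Ψ_j]) + Q[(y_p - y) Ψ_j]`. The product `y_p Ψ_j` lies in the span of the
degree-`2p` basis, and its `m`-th coefficient is `E[y_p · Ψ_j Ψ_m] ≤ ‖y_p‖₂ ‖Ψ_j Ψ_m‖₂ ≤ L T`
(Cauchy–Schwarz and Bessel), so the first term is at most `L T` times the `ℓ¹` residual `ε` of
the rule on that basis. The second term is at most `W ‖(y_p - y) Ψ_j‖₁ ≤ W ‖y - y_p‖₂ = W δ`.
-/

open MeasureTheory Finset

section

variable {Ω ι κ : Type*} {Ψ : ι → Ω → ℝ}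

lemma exists_sum_mul_eq_sum_of_mul_eq_sum [Fintype ι] [Fintype κ]
    {Φ : κ → Ω → ℝ} {g : Ω → ℝ} (h : ∀ l, ∃ a : ι → ℝ, ∀ x, g x * Φ l x = ∑ m, a m * Ψ m x)
    (d : κ → ℝ) :
    ∃ b : ι → ℝ, ∀ x, (∑ l, d l * Φ l x) * g x = ∑ m, b m * Ψ m x := by
  choose a ha using h
  refine ⟨fun m => ∑ l, d l * a l m, fun x => ?_⟩
  simp_rw [sum_mul, mul_assoc, mul_comm (Φ _ x), ha, mul_sum]
  rw [sum_comm]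

section Quadrature

variable [Fintype κ] (w : κ → ℝ) (ξ : κ → Ω)

def quadrature (f : Ω → ℝ) : ℝ :=
  ∑ k, w k * f (ξ k)

lemma quadrature_sub (f g : Ω → ℝ) :
    quadrature w ξ (fun x => f x - g x) = quadrature w ξ f - quadrature w ξ g := by
  simp only [quadrature, mul_sub, sum_sub_distrib]

lemma quadrature_sum_mul [Fintype ι] (b : ι → ℝ) (Ψ : ι → Ω → ℝ) :
    quadrature w ξ (fun x => ∑ m, b m * Ψ m x) = ∑ m, b m * quadrature w ξ (Ψ m) := by
  simp only [quadrature, mul_sum]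
  rw [sum_comm]
  simp_rw [mul_left_comm (w _)]

end Quadrature

variable [MeasurableSpace Ω] {μ : Measure Ω}

lemma integral_abs_mul_le_sqrt_mul_sqrt {f g : Ω → ℝ} (hf : MemLp f 2 μ) (hg : MemLp g 2 μ) :
    ∫ x, |f x * g x| ∂μ ≤ √(∫ x, f x ^ 2 ∂μ) * √(∫ x, g x ^ 2 ∂μ) := by
  have hofReal : ENNReal.ofReal 2 = 2 := by norm_num
  have hHolder := integral_mul_norm_le_Lp_mul_Lq (μ := μ) Real.HolderConjugate.two_two
    (hofReal ▸ hf) (hofReal ▸ hg)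
  simp only [Real.norm_eq_abs, ← abs_mul, Real.rpow_two, sq_abs] at hHolder
  simpa only [Real.sqrt_eq_rpow, one_div] using hHolder

lemma integrable_mul_of_memLp_two {f g : Ω → ℝ} (hf : MemLp f 2 μ) (hg : MemLp g 2 μ) :
    Integrable (fun x => f x * g x) μ :=
  hf.integrable_mul hg

def IsOrthonormalFamily [DecidableEq ι] (μ : Measure Ω) (Ψ : ι → Ω → ℝ) : Prop :=
  ∀ i j, ∫ x, Ψ i x * Ψ j x ∂μ = if i = j then 1 else 0

noncomputable def orthoProj [Fintype ι] (μ : Measure Ω) (Ψ : ι → Ω → ℝ) (y : Ω → ℝ) : Ω → ℝ :=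
  fun x => ∑ i, (∫ z, y z * Ψ i z ∂μ) * Ψ i x

section Projection

variable [Fintype ι]

lemma memLp_orthoProj (hΨ2 : ∀ i, MemLp (Ψ i) 2 μ) (y : Ω → ℝ) :
    MemLp (orthoProj μ Ψ y) 2 μ :=
  memLp_finsetSum _ fun i _ => (hΨ2 i).const_mul _

lemma integral_mul_orthoProj (hΨ2 : ∀ i, MemLp (Ψ i) 2 μ) {f : Ω → ℝ} (hf : MemLp f 2 μ)
    (y : Ω → ℝ) :
    ∫ x, f x * orthoProj μ Ψ y x ∂μ = ∑ i, (∫ x, y x * Ψ i x ∂μ) * ∫ x, f x * Ψ i x ∂μ := by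
  simp_rw [orthoProj, mul_sum, mul_left_comm (f _)]
  rw [integral_finsetSum _ fun i _ => (integrable_mul_of_memLp_two hf (hΨ2 i)).const_mul _]
  simp_rw [integral_const_mul]

end Projection

namespace IsOrthonormalFamily

variable [DecidableEq ι]

lemma comp_injective [DecidableEq κ] (hΨ : IsOrthonormalFamily μ Ψ) {e : κ → ι}
    (he : Function.Injective e) : IsOrthonormalFamily μ (fun l => Ψ (e l)) := by
  intro k l
  simp only [hΨ (e k) (e l), he.eq_iff]

lemma memLp_two (hΨ : IsOrthonormalFamily μ Ψ) {i : ι} (hmeas : AEStronglyMeasurable (Ψ i) μ) :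
    MemLp (Ψ i) 2 μ := by
  have hint : Integrable (fun x => Ψ i x * Ψ i x) μ :=
    Integrable.of_integral_ne_zero (by simp [hΨ i i])
  exact (memLp_two_iff_integrable_sq hmeas).2 (by simpa only [sq] using hint)

variable [Fintype ι]

lemma integral_sum_mul (hΨ : IsOrthonormalFamily μ Ψ) (hΨ2 : ∀ i, MemLp (Ψ i) 2 μ)
    (d : ι → ℝ) (i : ι) : ∫ x, (∑ m, d m * Ψ m x) * Ψ i x ∂μ = d i := by
  simp_rw [sum_mul, mul_assoc]
  rw [integral_finsetSum _ fun m _ => (integrable_mul_of_memLp_two (hΨ2 m) (hΨ2 i)).const_mul _]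
  simp [integral_const_mul, hΨ _ i]

lemma abs_coeff_le (hΨ : IsOrthonormalFamily μ Ψ) (hΨ2 : ∀ i, MemLp (Ψ i) 2 μ)
    {f g : Ω → ℝ} {b : ι → ℝ} (hfg : ∀ x, f x * g x = ∑ m, b m * Ψ m x) (hf : MemLp f 2 μ)
    {m : ι} (hgΨ : MemLp (fun x => g x * Ψ m x) 2 μ) :
    |b m| ≤ √(∫ x, f x ^ 2 ∂μ) * √(∫ x, (g x * Ψ m x) ^ 2 ∂μ) := by
  have hb : b m = ∫ x, f x * (g x * Ψ m x) ∂μ := by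
    rw [← hΨ.integral_sum_mul hΨ2 b m]
    simp_rw [← hfg, mul_assoc]
  rw [hb]
  exact abs_integral_le_integral_abs.trans (integral_abs_mul_le_sqrt_mul_sqrt hf hgΨ)

lemma integral_orthoProj_mul (hΨ : IsOrthonormalFamily μ Ψ) (hΨ2 : ∀ i, MemLp (Ψ i) 2 μ)
    (y : Ω → ℝ) (i : ι) : ∫ x, orthoProj μ Ψ y x * Ψ i x ∂μ = ∫ x, y x * Ψ i x ∂μ :=
  hΨ.integral_sum_mul hΨ2 _ i

/-- Bessel's inequality. -/
lemma integral_orthoProj_sq_le (hΨ : IsOrthonormalFamily μ Ψ) (hΨ2 : ∀ i, MemLp (Ψ i) 2 μ)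
    {y : Ω → ℝ} (hy : MemLp y 2 μ) : ∫ x, orthoProj μ Ψ y x ^ 2 ∂μ ≤ ∫ x, y x ^ 2 ∂μ := by
  have hP := memLp_orthoProj hΨ2 y
  have hyP : ∫ x, y x * orthoProj μ Ψ y x ∂μ = ∫ x, orthoProj μ Ψ y x ^ 2 ∂μ := by
    simp only [sq, integral_mul_orthoProj hΨ2 hy, integral_mul_orthoProj hΨ2 hP,
      hΨ.integral_orthoProj_mul hΨ2]
  have hyP_int := integrable_mul_of_memLp_two hy hP
  have hexpand : ∫ x, (y x - orthoProj μ Ψ y x) ^ 2 ∂μ = ∫ x, y x ^ 2 ∂μ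
      - 2 * ∫ x, y x * orthoProj μ Ψ y x ∂μ + ∫ x, orthoProj μ Ψ y x ^ 2 ∂μ := by
    have hcross := hyP_int.const_mul 2
    have hdiff : Integrable (fun x => y x ^ 2 - 2 * (y x * orthoProj μ Ψ y x)) μ :=
      hy.integrable_sq.sub hcross
    calc ∫ x, (y x - orthoProj μ Ψ y x) ^ 2 ∂μ
        = ∫ x, (y x ^ 2 - 2 * (y x * orthoProj μ Ψ y x)) + orthoProj μ Ψ y x ^ 2 ∂μ := by
          congr 1 with x; ring
      _ = _ := by
          rw [integral_add hdiff hP.integrable_sq,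
            integral_sub hy.integrable_sq hcross, integral_const_mul]
  have hnonneg : 0 ≤ ∫ x, (y x - orthoProj μ Ψ y x) ^ 2 ∂μ := integral_nonneg fun x => sq_nonneg _
  linarith

end IsOrthonormalFamily

section Quadrature

variable [Fintype κ] {w : κ → ℝ} {ξ : κ → Ω}

lemma abs_integral_sub_quadrature_sum_mul_le [Fintype ι] (hΨ : ∀ m, Integrable (Ψ m) μ) {b : ι → ℝ}
    {B : ℝ} (hb : ∀ m, |b m| ≤ B) :
    |∫ x, ∑ m, b m * Ψ m x ∂μ - quadrature w ξ (fun x => ∑ m, b m * Ψ m x)|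
      ≤ B * ∑ m, |quadrature w ξ (Ψ m) - ∫ x, Ψ m x ∂μ| := by
  rw [integral_finsetSum _ fun m _ => (hΨ m).const_mul _, quadrature_sum_mul,
    ← sum_sub_distrib, mul_sum]
  refine (abs_sum_le_sum_abs _ _).trans (sum_le_sum fun m _ => ?_)
  rw [integral_const_mul, ← mul_sub, abs_mul, abs_sub_comm]
  exact mul_le_mul_of_nonneg_right (hb m) (abs_nonneg _)

lemma abs_quadrature_mul_le {W : ℝ}
    (hW : ∀ f : Ω → ℝ, Integrable f μ → |quadrature w ξ f| ≤ W * ∫ x, |f x| ∂μ) (hW0 : 0 ≤ W)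
    {f g : Ω → ℝ} (hf : MemLp f 2 μ) (hg : MemLp g 2 μ) :
    |quadrature w ξ (fun x => f x * g x)| ≤ W * (√(∫ x, f x ^ 2 ∂μ) * √(∫ x, g x ^ 2 ∂μ)) :=
  (hW _ (integrable_mul_of_memLp_two hf hg)).trans
    (mul_le_mul_of_nonneg_left (integral_abs_mul_le_sqrt_mul_sqrt hf hg) hW0)

end Quadrature

namespace IsOrthonormalFamily

variable [DecidableEq ι] [Fintype κ] {w : κ → ℝ} {ξ : κ → Ω} {W : ℝ}

lemma integral_sq_eq_one (hΨ : IsOrthonormalFamily μ Ψ) (i : ι) : ∫ x, Ψ i x ^ 2 ∂μ = 1 := by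
  simpa [sq] using hΨ i i

lemma nonneg_of_abs_quadrature_le (hΨ : IsOrthonormalFamily μ Ψ) {i : ι} (hi : MemLp (Ψ i) 2 μ)
    (hW : ∀ f : Ω → ℝ, Integrable f μ → |quadrature w ξ f| ≤ W * ∫ x, |f x| ∂μ) : 0 ≤ W := by
  have h := hW _ (integrable_mul_of_memLp_two hi hi)
  simp only [← sq, abs_sq, hΨ.integral_sq_eq_one, mul_one] at h
  exact (abs_nonneg _).trans h

lemma abs_integral_mul_sub_quadrature_le [Fintype ι] (hΨ : IsOrthonormalFamily μ Ψ)
    (hΨint : ∀ m, Integrable (Ψ m) μ) {f g : Ω → ℝ} {b : ι → ℝ}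
    (hf : MemLp f 2 μ) (hfg : ∀ x, f x * g x = ∑ m, b m * Ψ m x) {L T : ℝ}
    (hL : √(∫ x, f x ^ 2 ∂μ) ≤ L) (hgΨ : ∀ m, MemLp (fun x => g x * Ψ m x) 2 μ)
    (hT : ∀ m, √(∫ x, (g x * Ψ m x) ^ 2 ∂μ) ≤ T) :
    |∫ x, f x * g x ∂μ - quadrature w ξ (fun x => f x * g x)|
      ≤ L * T * ∑ m, |quadrature w ξ (Ψ m) - ∫ x, Ψ m x ∂μ| := by
  have hΨ2 : ∀ m, MemLp (Ψ m) 2 μ := fun m => hΨ.memLp_two (hΨint m).1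
  have hb : ∀ m, |b m| ≤ L * T := fun m => (hΨ.abs_coeff_le hΨ2 hfg hf (hgΨ m)).trans
    (mul_le_mul hL (hT m) (Real.sqrt_nonneg _) ((Real.sqrt_nonneg _).trans hL))
  simp_rw [hfg]
  exact abs_integral_sub_quadrature_sum_mul_le hΨint hb

lemma abs_quadrature_mul_sub_quadrature_mul_le (hΨ : IsOrthonormalFamily μ Ψ) {i : ι}
    (hi : MemLp (Ψ i) 2 μ)
    (hW : ∀ f : Ω → ℝ, Integrable f μ → |quadrature w ξ f| ≤ W * ∫ x, |f x| ∂μ)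
    {f g : Ω → ℝ} (hf : MemLp f 2 μ) (hg : MemLp g 2 μ) :
    |quadrature w ξ (fun x => g x * Ψ i x) - quadrature w ξ (fun x => f x * Ψ i x)|
      ≤ W * √(∫ x, (f x - g x) ^ 2 ∂μ) := by
  have h := abs_quadrature_mul_le hW (hΨ.nonneg_of_abs_quadrature_le hi hW) (hf.sub hg) hi
  rw [hΨ.integral_sq_eq_one, Real.sqrt_one, mul_one] at h
  rw [abs_sub_comm, ← quadrature_sub]
  simpa only [← sub_mul, Pi.sub_apply] using h

end IsOrthonormalFamily

end

theorem stmt_18_general {Ω : Type*} [MeasurableSpace Ω] (μ : Measure Ω)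
    (n₁ n₂ : ℕ) (hn : n₁ ≤ n₂)
    (Ψ : Fin n₂ → Ω → ℝ)
    (horth : ∀ i j, ∫ x, Ψ i x * Ψ j x ∂μ = if i = j then (1 : ℝ) else 0)
    (hΨint : ∀ j, Integrable (Ψ j) μ)
    (hΨprod2 : ∀ i j, Integrable (fun x => (Ψ i x * Ψ j x) ^ 2) μ)
    (y : Ω → ℝ) (L δ ε W T : ℝ)
    (hymeas : AEStronglyMeasurable y μ)
    (hy2 : Integrable (fun x => (y x) ^ 2) μ)
    (hL : Real.sqrt (∫ x, (y x) ^ 2 ∂μ) ≤ L)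
    (c : Fin n₂ → ℝ) (hc : ∀ j, c j = ∫ x, y x * Ψ j x ∂μ)
    (yp : Ω → ℝ)
    (hyp : yp = fun x => ∑ j : Fin n₁, c (Fin.castLE hn j) * Ψ (Fin.castLE hn j) x)
    (hδ : Real.sqrt (∫ x, (y x - yp x) ^ 2 ∂μ) ≤ δ)
    (M : ℕ) (ξ : Fin M → Ω) (w : Fin M → ℝ)
    (hW : ∀ f : Ω → ℝ, Integrable f μ →
      |∑ k, w k * f (ξ k)| ≤ W * ∫ x, |f x| ∂μ)
    (hε : ∑ j : Fin n₂, |(∑ k, w k * Ψ j (ξ k)) - ∫ x, Ψ j x ∂μ| ≤ ε)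
    (hT : ∀ j l : Fin n₂, Real.sqrt (∫ x, (Ψ j x * Ψ l x) ^ 2 ∂μ) ≤ T)
    (hspan : ∀ j l : Fin n₁, ∃ a : Fin n₂ → ℝ,
      ∀ x, Ψ (Fin.castLE hn j) x * Ψ (Fin.castLE hn l) x = ∑ m, a m * Ψ m x) :
    ∀ j : Fin n₁,
      |c (Fin.castLE hn j) - ∑ k, w k * (y (ξ k) * Ψ (Fin.castLE hn j) (ξ k))| ≤
        L * T * ε + W * δ := by
  intro j
  set J := Fin.castLE hn j
  have hΨ : IsOrthonormalFamily μ Ψ := horth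
  have hΨ2 : ∀ m, MemLp (Ψ m) 2 μ := fun m => hΨ.memLp_two (hΨint m).1
  have hΦ : IsOrthonormalFamily μ (fun l => Ψ (Fin.castLE hn l)) :=
    hΨ.comp_injective (Fin.castLE_injective hn)
  have hyp_eq : yp = orthoProj μ (fun l => Ψ (Fin.castLE hn l)) y := by
    rw [hyp]
    simp only [hc]
    rfl
  have hy : MemLp y 2 μ := (memLp_two_iff_integrable_sq hymeas).2 hy2
  have hyp2 : MemLp yp 2 μ := hyp_eq ▸ memLp_orthoProj (fun l => hΨ2 _) y
  have hypL : √(∫ x, yp x ^ 2 ∂μ) ≤ L := by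
    rw [hyp_eq]
    exact (Real.sqrt_le_sqrt (hΦ.integral_orthoProj_sq_le (fun l => hΨ2 _) hy)).trans hL
  have hcJ : c J = ∫ x, yp x * Ψ J x ∂μ := by
    rw [hyp_eq, hΦ.integral_orthoProj_mul (fun l => hΨ2 _) y j, hc]
  have hW0 : 0 ≤ W := hΨ.nonneg_of_abs_quadrature_le (hΨ2 J) hW
  have hLT : 0 ≤ L * T :=
    mul_nonneg ((Real.sqrt_nonneg _).trans hL) ((Real.sqrt_nonneg _).trans (hT J J))
  obtain ⟨b, hb⟩ : ∃ b : Fin n₂ → ℝ, ∀ x, yp x * Ψ J x = ∑ m, b m * Ψ m x := by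
    rw [hyp]
    exact exists_sum_mul_eq_sum_of_mul_eq_sum (hspan j) _
  have hquad : |c J - quadrature w ξ (fun x => yp x * Ψ J x)| ≤ L * T * ε := by
    rw [hcJ]
    refine (hΨ.abs_integral_mul_sub_quadrature_le hΨint hyp2 hb hypL (fun m => ?_) (hT J)).trans
      (mul_le_mul_of_nonneg_left hε hLT)
    exact (memLp_two_iff_integrable_sq ((hΨint J).1.mul (hΨint m).1)).2 (hΨprod2 J m)
  have hproj := hΨ.abs_quadrature_mul_sub_quadrature_mul_le (hΨ2 J) hW hy hyp2
  exact (abs_sub_le _ _ _).trans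
    (add_le_add hquad (hproj.trans (mul_le_mul_of_nonneg_left hδ hW0)))

/-- Coefficient error bound: under Assumptions 1–3, every computed coefficient satisfies
`|c_j - c̃_j| ≤ L T ε + W δ`. -/
theorem stmt_18 {Ω : Type*} [MeasurableSpace Ω] (μ : Measure Ω) [IsProbabilityMeasure μ]
    (n₁ n₂ : ℕ) (hn : n₁ ≤ n₂)
    (Ψ : Fin n₂ → Ω → ℝ)
    (horth : ∀ i j, ∫ x, Ψ i x * Ψ j x ∂μ = if i = j then (1 : ℝ) else 0)
    (hΨint : ∀ j, Integrable (Ψ j) μ)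
    (hΨprod2 : ∀ i j, Integrable (fun x => (Ψ i x * Ψ j x) ^ 2) μ)
    (y : Ω → ℝ) (L δ ε W T : ℝ)
    (hymeas : AEStronglyMeasurable y μ)
    (hy2 : Integrable (fun x => (y x) ^ 2) μ)
    (hyΨ : ∀ j, Integrable (fun x => y x * Ψ j x) μ)
    (hL : Real.sqrt (∫ x, (y x) ^ 2 ∂μ) ≤ L)
    (c : Fin n₂ → ℝ) (hc : ∀ j, c j = ∫ x, y x * Ψ j x ∂μ)
    (yp : Ω → ℝ)
    (hyp : yp = fun x => ∑ j : Fin n₁, c (Fin.castLE hn j) * Ψ (Fin.castLE hn j) x)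
    (hδ : Real.sqrt (∫ x, (y x - yp x) ^ 2 ∂μ) ≤ δ)
    (hdiff2 : Integrable (fun x => (y x - yp x) ^ 2) μ)
    (M : ℕ) (ξ : Fin M → Ω) (w : Fin M → ℝ)
    (hW : ∀ f : Ω → ℝ, Integrable f μ →
      |∑ k, w k * f (ξ k)| ≤ W * ∫ x, |f x| ∂μ)
    (hε : ∑ j : Fin n₂, |(∑ k, w k * Ψ j (ξ k)) - ∫ x, Ψ j x ∂μ| ≤ ε)
    (hT : ∀ j l : Fin n₂, Real.sqrt (∫ x, (Ψ j x * Ψ l x) ^ 2 ∂μ) ≤ T)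
    (hspan : ∀ j l : Fin n₁, ∃ a : Fin n₂ → ℝ,
      ∀ x, Ψ (Fin.castLE hn j) x * Ψ (Fin.castLE hn l) x = ∑ m, a m * Ψ m x) :
    ∀ j : Fin n₁,
      |c (Fin.castLE hn j) - ∑ k, w k * (y (ξ k) * Ψ (Fin.castLE hn j) (ξ k))| ≤
        L * T * ε + W * δ :=
  stmt_18_general μ n₁ n₂ hn Ψ horth hΨint hΨprod2 y L δ ε W T hymeas hy2 hL c hc yp hyp hδ M ξ w hW
    hε hT hspan
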